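/- arXiv:2605.14804 — 5 statements merged into one kernel-verified Lean document; each statement's English description precedes it below -/
import Mathlib

section
/- Let ℓ be a positive integer and let L = Z_ℓ × Z_2 × Z_2 with the lexicographic order. Let φ : L → Z_2 be any 2-colouring of L. For c ∈ Z_2, let a_c be the number of pairs {x, x⁺} (where x⁺ denotes the lexicographic successor, with the convention (ℓ-1,1,1)⁺ = (0,0,0)) such that x has third coordinate 0 and φ(x) = φ(x⁺) = c, and let b_c be the number of such pairs where x⁺ has third coordinate 0 and φ(x) = φ(x⁺) = c. Then a_0 + b_1 = a_1 + b_0. -/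
/-- The cyclic lexicographic successor on `Z_ℓ × Z_2 × Z_2`
(the successor of `(ℓ-1,1,1)` is `(0,0,0)`). -/
def lexSucc {ℓ : ℕ} (x : ZMod ℓ × ZMod 2 × ZMod 2) : ZMod ℓ × ZMod 2 × ZMod 2 :=
  if x.2.2 = 0 then (x.1, x.2.1, 1)
  else if x.2.1 = 0 then (x.1, 1, 0)
  else (x.1 + 1, 0, 0)

/-- The cyclic lexicographic predecessor. -/
def lexPred {ℓ : ℕ} (x : ZMod ℓ × ZMod 2 × ZMod 2) : ZMod ℓ × ZMod 2 × ZMod 2 :=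
  if x.2.2 = 0 then
    (if x.2.1 = 0 then (x.1 - 1, 1, 1) else (x.1, 0, 1))
  else (x.1, x.2.1, 0)

lemma zmod2_cases : ∀ z : ZMod 2, z = 0 ∨ z = 1 := by decide

lemma pred_succ {ℓ : ℕ} (x : ZMod ℓ × ZMod 2 × ZMod 2) : lexPred (lexSucc x) = x := by
  obtain ⟨x1, x2, x3⟩ := x
  rcases zmod2_cases x2 with h2 | h2 <;> rcases zmod2_cases x3 with h3 | h3 <;>
    simp [lexSucc, lexPred, h2, h3]

lemma succ_pred {ℓ : ℕ} (x : ZMod ℓ × ZMod 2 × ZMod 2) : lexSucc (lexPred x) = x := by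
  obtain ⟨x1, x2, x3⟩ := x
  rcases zmod2_cases x2 with h2 | h2 <;> rcases zmod2_cases x3 with h3 | h3 <;>
    simp [lexSucc, lexPred, h2, h3]

lemma succ_snd {ℓ : ℕ} (x : ZMod ℓ × ZMod 2 × ZMod 2) :
    (lexSucc x).2.2 = 0 ↔ ¬ x.2.2 = 0 := by
  obtain ⟨x1, x2, x3⟩ := x
  rcases zmod2_cases x2 with h2 | h2 <;> rcases zmod2_cases x3 with h3 | h3 <;>
    simp [lexSucc, h2, h3]

theorem stmt0 (ℓ : ℕ) [NeZero ℓ] (φ : ZMod ℓ × ZMod 2 × ZMod 2 → ZMod 2)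
    (a b : ZMod 2 → ℕ)
    (ha : ∀ c, a c = (Finset.univ.filter
      (fun x : ZMod ℓ × ZMod 2 × ZMod 2 =>
        x.2.2 = 0 ∧ φ x = c ∧ φ (lexSucc x) = c)).card)
    (hb : ∀ c, b c = (Finset.univ.filter
      (fun x : ZMod ℓ × ZMod 2 × ZMod 2 =>
        (lexSucc x).2.2 = 0 ∧ φ x = c ∧ φ (lexSucc x) = c)).card) :
    a 0 + b 1 = a 1 + b 0 := by
  classical
  set ψ : (ZMod ℓ × ZMod 2 × ZMod 2) → ℤ := fun x => if φ x = 0 then 0 else 1 with hψ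
  set S0 : Finset (ZMod ℓ × ZMod 2 × ZMod 2) := Finset.univ.filter (fun x => x.2.2 = 0) with hS0def
  set S1 : Finset (ZMod ℓ × ZMod 2 × ZMod 2) := Finset.univ.filter (fun x => ¬ x.2.2 = 0) with hS1def
  -- indicator identities
  have hind0 : ∀ x : ZMod ℓ × ZMod 2 × ZMod 2, ((if φ x = 0 ∧ φ (lexSucc x) = 0 then (1 : ℤ) else 0)) =
      (1 - ψ x) * (1 - ψ (lexSucc x)) := by
    intro x
    rcases zmod2_cases (φ x) with h | h <;>
      rcases zmod2_cases (φ (lexSucc x)) with h' | h' <;>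
      simp [hψ, h, h']
  have hind1 : ∀ x : ZMod ℓ × ZMod 2 × ZMod 2, ((if φ x = 1 ∧ φ (lexSucc x) = 1 then (1 : ℤ) else 0)) =
      ψ x * ψ (lexSucc x) := by
    intro x
    rcases zmod2_cases (φ x) with h | h <;>
      rcases zmod2_cases (φ (lexSucc x)) with h' | h' <;>
      simp [hψ, h, h']
  -- express cards as integer sums over S0 / S1
  have hcard : ∀ (P : (ZMod ℓ × ZMod 2 × ZMod 2) → Prop) [DecidablePred P] (c : ZMod 2),
      ((Finset.univ.filter (fun x : ZMod ℓ × ZMod 2 × ZMod 2 => P x ∧ φ x = c ∧ φ (lexSucc x) = c)).card : ℤ) =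
      ∑ x ∈ Finset.univ.filter P, (if φ x = c ∧ φ (lexSucc x) = c then (1 : ℤ) else 0) := by
    intro P _ c
    rw [← Finset.filter_filter, Finset.card_filter]
    push_cast
    rfl
  have ha0 : (a 0 : ℤ) = ∑ x ∈ S0, (1 - ψ x) * (1 - ψ (lexSucc x)) := by
    rw [ha 0, hcard (fun x : ZMod ℓ × ZMod 2 × ZMod 2 => x.2.2 = 0) 0]
    exact Finset.sum_congr rfl fun x _ => hind0 x
  have ha1 : (a 1 : ℤ) = ∑ x ∈ S0, ψ x * ψ (lexSucc x) := by
    rw [ha 1, hcard (fun x : ZMod ℓ × ZMod 2 × ZMod 2 => x.2.2 = 0) 1]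
    exact Finset.sum_congr rfl fun x _ => hind1 x
  have hb0 : (b 0 : ℤ) = ∑ x ∈ S1, (1 - ψ x) * (1 - ψ (lexSucc x)) := by
    rw [hb 0]
    have : (Finset.univ.filter
        (fun x : ZMod ℓ × ZMod 2 × ZMod 2 => (lexSucc x).2.2 = 0 ∧ φ x = 0 ∧ φ (lexSucc x) = 0)) =
        (Finset.univ.filter (fun x : ZMod ℓ × ZMod 2 × ZMod 2 => (¬ x.2.2 = 0) ∧ φ x = 0 ∧ φ (lexSucc x) = 0)) := by
      apply Finset.filter_congr
      intro x _
      rw [succ_snd]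
    rw [this, hcard (fun x : ZMod ℓ × ZMod 2 × ZMod 2 => ¬ x.2.2 = 0) 0]
    exact Finset.sum_congr rfl fun x _ => hind0 x
  have hb1 : (b 1 : ℤ) = ∑ x ∈ S1, ψ x * ψ (lexSucc x) := by
    rw [hb 1]
    have : (Finset.univ.filter
        (fun x : ZMod ℓ × ZMod 2 × ZMod 2 => (lexSucc x).2.2 = 0 ∧ φ x = 1 ∧ φ (lexSucc x) = 1)) =
        (Finset.univ.filter (fun x : ZMod ℓ × ZMod 2 × ZMod 2 => (¬ x.2.2 = 0) ∧ φ x = 1 ∧ φ (lexSucc x) = 1)) := by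
      apply Finset.filter_congr
      intro x _
      rw [succ_snd]
    rw [this, hcard (fun x : ZMod ℓ × ZMod 2 × ZMod 2 => ¬ x.2.2 = 0) 1]
    exact Finset.sum_congr rfl fun x _ => hind1 x
  -- bijection facts
  have mem01 : ∀ x : ZMod ℓ × ZMod 2 × ZMod 2, x ∈ S0 → lexSucc x ∈ S1 := by
    intro x hx
    simp only [hS0def, hS1def, Finset.mem_filter, Finset.mem_univ, true_and] at hx ⊢
    rw [succ_snd] at *
    simpa using hx
  have mem10 : ∀ x : ZMod ℓ × ZMod 2 × ZMod 2, x ∈ S1 → lexSucc x ∈ S0 := by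
    intro x hx
    simp only [hS0def, hS1def, Finset.mem_filter, Finset.mem_univ, true_and] at hx ⊢
    rw [succ_snd]
    exact hx
  have memp0 : ∀ x : ZMod ℓ × ZMod 2 × ZMod 2, x ∈ S0 → lexPred x ∈ S1 := by
    intro x hx
    have := mem10 (lexPred x)
    simp only [hS0def, hS1def, Finset.mem_filter, Finset.mem_univ, true_and] at hx ⊢
    intro h
    have : (lexSucc (lexPred x)).2.2 = 0 := by rw [succ_pred]; exact hx
    rw [succ_snd] at this
    exact this h
  have memp1 : ∀ x : ZMod ℓ × ZMod 2 × ZMod 2, x ∈ S1 → lexPred x ∈ S0 := by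
    intro x hx
    simp only [hS0def, hS1def, Finset.mem_filter, Finset.mem_univ, true_and] at hx ⊢
    by_contra h
    have : (lexSucc (lexPred x)).2.2 = 0 := by rw [succ_snd]; exact h
    rw [succ_pred] at this
    exact hx this
  have hsum01 : ∑ x ∈ S0, ψ (lexSucc x) = ∑ x ∈ S1, ψ x :=
    Finset.sum_nbij' lexSucc lexPred (fun x hx => mem01 x hx) (fun x hx => memp1 x hx)
      (fun x _ => pred_succ x) (fun x _ => succ_pred x) (fun x _ => rfl)
  have hsum10 : ∑ x ∈ S1, ψ (lexSucc x) = ∑ x ∈ S0, ψ x :=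
    Finset.sum_nbij' lexSucc lexPred (fun x hx => mem10 x hx) (fun x hx => memp0 x hx)
      (fun x _ => pred_succ x) (fun x _ => succ_pred x) (fun x _ => rfl)
  have hcardeq : (S0.card : ℤ) = S1.card := by
    have : S0.card = S1.card :=
      Finset.card_nbij' lexSucc lexPred (fun x hx => mem01 x hx) (fun x hx => memp1 x hx)
        (fun x _ => pred_succ x) (fun x _ => succ_pred x)
    exact_mod_cast this
  -- expand products
  have expand : ∀ T : Finset (ZMod ℓ × ZMod 2 × ZMod 2),
      ∑ x ∈ T, (1 - ψ x) * (1 - ψ (lexSucc x)) =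
      (T.card : ℤ) - (∑ x ∈ T, ψ x) - (∑ x ∈ T, ψ (lexSucc x)) +
        ∑ x ∈ T, ψ x * ψ (lexSucc x) := by
    intro T
    have : ∀ x ∈ T, (1 - ψ x) * (1 - ψ (lexSucc x)) =
        1 - ψ x - ψ (lexSucc x) + ψ x * ψ (lexSucc x) := fun x _ => by ring
    rw [Finset.sum_congr rfl this]
    simp [Finset.sum_add_distrib, Finset.sum_sub_distrib]
  have key : (a 0 : ℤ) + (b 1 : ℤ) = (a 1 : ℤ) + (b 0 : ℤ) := by
    rw [ha0, ha1, hb0, hb1, expand S0, expand S1, hsum01, hsum10, hcardeq]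
    ring
  exact_mod_cast key
end

section
/- A complete bipartite graph K_{m,n} (with m, n ≥ 1) admits a decomposition into 4-cycles if and only if both m and n are even. -/
open Function Sum

private lemma zmod4_cases : ∀ i : ZMod 4, i = 0 ∨ i = 1 ∨ i = 2 ∨ i = 3 := by decide

private lemma zmod4_succ_ne_pred : ∀ i : ZMod 4, i + 1 ≠ i - 1 := by decide

private lemma even_aux {V Y : Type*} [Fintype Y] [DecidableEq Y] [DecidableEq V]
    (G : SimpleGraph V) (D : Set (ZMod 4 → V))
    (hD : ∀ c ∈ D, Function.Injective c ∧ ∀ i, G.Adj (c i) (c (i + 1)))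
    (huniq : ∀ e ∈ G.edgeSet, ∃! c, c ∈ D ∧ ∃ i : ZMod 4, e = s(c i, c (i + 1)))
    (v : V) (ψ : Y → V) (hψ : Function.Injective ψ)
    (hadj : ∀ y, G.Adj v (ψ y)) (hsurj : ∀ w, G.Adj v w → ∃ y, w = ψ y) :
    Even (Fintype.card Y) := by
  classical
  have he : ∀ y : Y, s(v, ψ y) ∈ G.edgeSet := fun y => hadj y
  choose f hf using fun y => huniq _ (he y)
  have hvne : ∀ y, v ≠ ψ y := fun y h => G.loopless.irrefl _ (h ▸ hadj y)
  have fiber : ∀ c ∈ Finset.univ.image f,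
      (Finset.univ.filter (fun y => f y = c)).card = 2 := by
    intro c hc
    obtain ⟨y₀, -, rfl⟩ := Finset.mem_image.1 hc
    obtain ⟨⟨hcD, j, hj⟩, -⟩ := hf y₀
    have hinj := (hD _ hcD).1
    have hadjc := (hD _ hcD).2
    rw [Sym2.eq_iff] at hj
    -- find i0 with f y₀ i0 = v
    obtain ⟨i0, h0⟩ : ∃ i0, f y₀ i0 = v := by
      rcases hj with ⟨h1, -⟩ | ⟨h1, -⟩
      · exact ⟨j, h1.symm⟩
      · exact ⟨j + 1, h1.symm⟩
    have hsub : i0 - 1 + 1 = i0 := by ring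
    have h1 : G.Adj v (f y₀ (i0 + 1)) := h0 ▸ hadjc i0
    have h2 : G.Adj v (f y₀ (i0 - 1)) := by
      have := hadjc (i0 - 1)
      rw [hsub, h0] at this
      exact this.symm
    obtain ⟨y1, hy1⟩ := hsurj _ h1
    obtain ⟨y2, hy2⟩ := hsurj _ h2
    have hne12 : y1 ≠ y2 := by
      rintro rfl
      exact zmod4_succ_ne_pred i0 (hinj (hy1 ▸ hy2 ▸ rfl))
    have : (Finset.univ.filter (fun y => f y = f y₀)) = {y1, y2} := by
      ext y
      simp only [Finset.mem_filter, Finset.mem_univ, true_and, Finset.mem_insert,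
        Finset.mem_singleton]
      constructor
      · intro hy
        obtain ⟨⟨-, i, hi⟩, -⟩ := hf y
        rw [hy, Sym2.eq_iff] at hi
        rcases hi with ⟨hv', hψ'⟩ | ⟨hv', hψ'⟩
        · have : i = i0 := hinj (by rw [← hv', h0])
          subst this
          exact Or.inl (hψ (by rw [hψ', hy1]))
        · have hii : i + 1 = i0 := hinj (by rw [← hv', h0])
          have : i = i0 - 1 := by rw [← hii]; ring
          subst this
          exact Or.inr (hψ (by rw [hψ', hy2]))
      · intro hy
        rcases hy with rfl | rfl
        · exact ((hf y).2 _ ⟨hcD, i0, by rw [h0, ← hy1]⟩).symm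
        · refine ((hf y).2 _ ⟨hcD, i0 - 1, ?_⟩).symm
          rw [hsub, h0, ← hy2]
          exact Sym2.eq_swap
    rw [this, Finset.card_pair hne12]
  have hcard : Fintype.card Y = ∑ c ∈ Finset.univ.image f, 2 := by
    rw [← Finset.card_univ, Finset.card_eq_sum_card_image f]
    exact Finset.sum_congr rfl fiber
  rw [hcard, Finset.sum_const, smul_eq_mul]
  exact ⟨_, by ring⟩

private def dce {m : ℕ} (x : Fin m) : Fin m := ⟨2 * (x.val / 2), by have := x.isLt; omega⟩

private def uce {m : ℕ} (hm : m % 2 = 0) (x : Fin m) : Fin m :=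
  ⟨2 * (x.val / 2) + 1, by have := x.isLt; omega⟩

private def cyc4 {m n : ℕ} (hm : m % 2 = 0) (hn : n % 2 = 0) (p : Fin m × Fin n) :
    ZMod 4 → (Fin m ⊕ Fin n) := fun i =>
  if i = 0 then .inl (dce p.1)
  else if i = 1 then .inr (dce p.2)
  else if i = 2 then .inl (uce hm p.1)
  else .inr (uce hn p.2)

private lemma cyc4_eq {m n : ℕ} (hm : m % 2 = 0) (hn : n % 2 = 0) {p q : Fin m × Fin n}
    (h1 : p.1.val / 2 = q.1.val / 2) (h2 : p.2.val / 2 = q.2.val / 2) :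
    cyc4 hm hn p = cyc4 hm hn q := by
  funext i
  simp [cyc4, dce, uce, Fin.ext_iff, h1, h2]

/-- `K_{m,n}` (with `m, n ≥ 1`) admits a decomposition into 4-cycles iff `m` and `n`
are both even.  A 4-cycle is given as an injective map `c : ZMod 4 → V` with consecutive
vertices adjacent; a decomposition is a family of such cycles in which every edge of the
graph lies in exactly one cycle. -/
theorem stmt6 (m n : ℕ) (hm : 1 ≤ m) (hn : 1 ≤ n) :
    (∃ D : Set (ZMod 4 → (Fin m ⊕ Fin n)),
      (∀ c ∈ D, Function.Injective c ∧
        ∀ i, (completeBipartiteGraph (Fin m) (Fin n)).Adj (c i) (c (i + 1))) ∧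
      ∀ e ∈ (completeBipartiteGraph (Fin m) (Fin n)).edgeSet,
        ∃! c, c ∈ D ∧ ∃ i : ZMod 4, e = s(c i, c (i + 1))) ↔
    Even m ∧ Even n := by
  constructor
  · rintro ⟨D, hD, huniq⟩
    constructor
    · have := even_aux (completeBipartiteGraph (Fin m) (Fin n)) D hD huniq
        (Sum.inr (⟨0, hn⟩ : Fin n)) (Sum.inl : Fin m → Fin m ⊕ Fin n)
        Sum.inl_injective (fun x => by simp) ?_
      · simpa using this
      · intro w hw
        cases w with
        | inl x => exact ⟨x, rfl⟩
        | inr y => simp at hw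
    · have := even_aux (completeBipartiteGraph (Fin m) (Fin n)) D hD huniq
        (Sum.inl (⟨0, hm⟩ : Fin m)) (Sum.inr : Fin n → Fin m ⊕ Fin n)
        Sum.inr_injective (fun y => by simp) ?_
      · simpa using this
      · intro w hw
        cases w with
        | inl x => simp at hw
        | inr y => exact ⟨y, rfl⟩
  · rintro ⟨hme, hne⟩
    have hm2 : m % 2 = 0 := Nat.even_iff.mp hme
    have hn2 : n % 2 = 0 := Nat.even_iff.mp hne
    refine ⟨Set.range (cyc4 hm2 hn2), ?_, ?_⟩
    · rintro c ⟨p, rfl⟩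
      constructor
      · intro i j hij
        rcases zmod4_cases i with rfl | rfl | rfl | rfl <;>
          rcases zmod4_cases j with rfl | rfl | rfl | rfl <;>
          first
            | rfl
            | (simp +decide [cyc4, dce, uce, Fin.ext_iff] at hij)
      · intro i
        rcases zmod4_cases i with rfl | rfl | rfl | rfl <;> simp +decide [cyc4]
    · intro e he
      have key : ∀ (x : Fin m) (y : Fin n) (e : Sym2 (Fin m ⊕ Fin n)),
          e = s(.inl x, .inr y) →
          ∃! c, c ∈ Set.range (cyc4 hm2 hn2) ∧ ∃ i : ZMod 4, e = s(c i, c (i + 1)) := by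
        rintro x y e rfl
        refine ⟨cyc4 hm2 hn2 (x, y), ⟨⟨(x, y), rfl⟩, ?_⟩, ?_⟩
        · rcases Nat.mod_two_eq_zero_or_one x.val with hx | hx <;>
            rcases Nat.mod_two_eq_zero_or_one y.val with hy | hy
          · have h1 : dce x = x := Fin.ext (by simp [dce]; omega)
            have h2 : dce y = y := Fin.ext (by simp [dce]; omega)
            exact ⟨0, by simp +decide [cyc4, h1, h2]⟩
          · have h1 : dce x = x := Fin.ext (by simp [dce]; omega)
            have h2 : uce hn2 y = y := Fin.ext (by simp [uce]; omega)
            exact ⟨3, by simp +decide [cyc4, h1, h2, Sym2.eq_swap]⟩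
          · have h1 : uce hm2 x = x := Fin.ext (by simp [uce]; omega)
            have h2 : dce y = y := Fin.ext (by simp [dce]; omega)
            exact ⟨1, by simp +decide [cyc4, h1, h2, Sym2.eq_swap]⟩
          · have h1 : uce hm2 x = x := Fin.ext (by simp [uce]; omega)
            have h2 : uce hn2 y = y := Fin.ext (by simp [uce]; omega)
            exact ⟨2, by simp +decide [cyc4, h1, h2]⟩
        · rintro c ⟨⟨p, rfl⟩, i, hi⟩
          rcases zmod4_cases i with rfl | rfl | rfl | rfl <;>
            simp +decide [cyc4, Sym2.eq_iff, dce, uce, Fin.ext_iff] at hi <;>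
            exact cyc4_eq hm2 hn2 (show p.1.val / 2 = x.val / 2 by omega)
              (show p.2.val / 2 = y.val / 2 by omega)
      induction e with
      | _ u w =>
        rw [SimpleGraph.mem_edgeSet] at he
        match u, w, he with
        | .inl x, .inr y, _ => exact key x y _ rfl
        | .inr y, .inl x, _ => exact key x y _ Sym2.eq_swap
        | .inl x, .inl x', h => simp at h
        | .inr y, .inr y', h => simp at h
end

section
/- There exists a 4-cycle decomposition 𝒟 of the complete graph K₉ on vertex set {a₁,a₂,a₃,a₄, b₁,b₂,b₃,b₄, s₁} with the following property: the colouring assigning colour 1 to {a₁,...,a₄} and colour 2 to {b₁,...,b₄,s₁} is a weak 2-colouring of 𝒟, and it is the unique weak 2-colouring ψ of 𝒟 satisfying ψ(aᵢ) = 1 for all i and ψ(bⱼ) = 2 for all j. An explicit such decomposition is given by the nine 4-cycles (a₁,a₃,a₂,s₁), (a₂,a₄,a₃,b₃), (a₃,b₁,a₄,b₄), (a₄,b₂,b₁,a₁), (b₁,s₁,b₂,a₂), (b₂,b₃,s₁,a₃), (s₁,b₄,b₃,a₄), (b₃,a₁,b₄,b₁), (b₄,a₂,a₁,b₂). -/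
set_option maxRecDepth 100000


/-- The edge set of the 4-cycle `(x,y,z,w)`. -/
def cycEdges (c : Fin 9 × Fin 9 × Fin 9 × Fin 9) : Finset (Sym2 (Fin 9)) :=
  {s(c.1, c.2.1), s(c.2.1, c.2.2.1), s(c.2.2.1, c.2.2.2), s(c.2.2.2, c.1)}

/-- A 4-cycle is monochromatic under `ψ` if all four vertices get the same colour. -/
def monoCyc (ψ : Fin 9 → Fin 2) (c : Fin 9 × Fin 9 × Fin 9 × Fin 9) : Prop :=
  ψ c.1 = ψ c.2.1 ∧ ψ c.2.1 = ψ c.2.2.1 ∧ ψ c.2.2.1 = ψ c.2.2.2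

/-- There is a 4-cycle decomposition `D` of `K₉` on vertices
`a₁,…,a₄ = 0,…,3`, `b₁,…,b₄ = 4,…,7`, `s₁ = 8` such that the colouring giving colour `0`
to the `aᵢ` and colour `1` to the `bⱼ` and `s₁` is a weak 2-colouring of `D`, and it is
the unique weak 2-colouring `ψ` of `D` with `ψ aᵢ = 0` and `ψ bⱼ = 1` for all `i, j`
(i.e. `D` is anchored to `{P₁,P₂}`). -/
theorem stmt11 : ∃ D : List (Fin 9 × Fin 9 × Fin 9 × Fin 9),
    (∀ e : Sym2 (Fin 9),
      (¬ e.IsDiag ↔ ∃ c ∈ D, e ∈ cycEdges c) ∧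
      (∀ c ∈ D, ∀ c' ∈ D, e ∈ cycEdges c → e ∈ cycEdges c' → c = c')) ∧
    (∀ c ∈ D, ¬ monoCyc ![0, 0, 0, 0, 1, 1, 1, 1, 1] c) ∧
    (∀ ψ : Fin 9 → Fin 2, (∀ c ∈ D, ¬ monoCyc ψ c) →
      (∀ i : Fin 9, i.val < 4 → ψ i = 0) →
      (∀ i : Fin 9, 4 ≤ i.val → i.val < 8 → ψ i = 1) →
      ψ = ![0, 0, 0, 0, 1, 1, 1, 1, 1]) := by
  use [(0,2,1,8),(1,3,2,6),(2,4,3,7),(3,5,4,0),(4,8,5,1),(5,6,8,2),(8,7,6,3),(6,0,7,4),(7,1,0,5)]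
  refine ⟨?_, ?_, ?_⟩
  · intro e
    induction e using Sym2.ind with
    | _ x y =>
      simp only [cycEdges, Finset.mem_insert,
        Finset.mem_singleton, Sym2.eq_iff, Sym2.isDiag_iff_proj_eq]
      constructor
      · revert x y; decide
      · revert x y; decide
  · intro c hc
    fin_cases hc <;> simp [monoCyc] <;> decide
  · intro ψ hm h1 h2
    have a0 : ψ 0 = 0 := h1 0 (by decide)
    have a1 : ψ 1 = 0 := h1 1 (by decide)
    have a2 : ψ 2 = 0 := h1 2 (by decide)
    have a3 : ψ 3 = 0 := h1 3 (by decide)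
    have b4 : ψ 4 = 1 := h2 4 (by decide) (by decide)
    have b5 : ψ 5 = 1 := h2 5 (by decide) (by decide)
    have b6 : ψ 6 = 1 := h2 6 (by decide) (by decide)
    have b7 : ψ 7 = 1 := h2 7 (by decide) (by decide)
    have hc := hm (0,2,1,8) (by simp)
    simp only [monoCyc] at hc
    rw [a0, a1, a2] at hc
    have h8 : ψ 8 = 1 := by
      generalize ψ 8 = v at hc
      revert hc; revert v; decide
    funext i
    fin_cases i
    · simpa using a0
    · simpa using a1
    · simpa using a2
    · simpa using a3
    · simpa using b4
    · simpa using b5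
    · simpa using b6
    · simpa using b7
    · simpa using h8
end

section
/- For all even integers n with n ≥ 4, the cocktail party graph K_n − I (the complete graph on n vertices minus a perfect matching I) admits a decomposition into 4-cycles. -/
/-- The cocktail party graph `K_n − I` for even `n`: vertices `Fin n`, with the perfect
matching `I` consisting of the pairs `{2k, 2k+1}` removed; two vertices are adjacent iff
they lie in different matching pairs. -/
def cocktailGraph (n : ℕ) : SimpleGraph (Fin n) where
  Adj x y := x.val / 2 ≠ y.val / 2
  symm := ⟨fun x y h => h.symm⟩
  loopless := ⟨fun x h => h rfl⟩

/-- The 4-cycle `2i, 2j, 2i+1, 2j+1` in `Fin n`. -/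
def cyc (n i j : ℕ) (hi : 2*i+1 < n) (hj : 2*j+1 < n) : ZMod 4 → Fin n :=
  ![⟨2*i, by omega⟩, ⟨2*j, by omega⟩, ⟨2*i+1, hi⟩, ⟨2*j+1, hj⟩]

lemma z01 : (0:ZMod 4)+1 = 1 := by decide
lemma z12 : (1:ZMod 4)+1 = 2 := by decide
lemma z23 : (2:ZMod 4)+1 = 3 := by decide
lemma z30 : (3:ZMod 4)+1 = 0 := by decide

lemma cyc_halves (n i j : ℕ) (hi : 2*i+1 < n) (hj : 2*j+1 < n) (k : ZMod 4) :
    ((cyc n i j hi hj k).val/2 = i ∧ (cyc n i j hi hj (k+1)).val/2 = j) ∨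
    ((cyc n i j hi hj k).val/2 = j ∧ (cyc n i j hi hj (k+1)).val/2 = i) := by
  fin_cases k <;> simp [cyc, z01, z12, z23, z30] <;>
    simp [Matrix.vecCons, Fin.cons, Fin.cases, Fin.induction, Fin.induction.go, Fin.add] <;> omega

/-- For all even `n ≥ 4`, the cocktail party graph `K_n − I` admits a decomposition into
4-cycles: a family of injective maps `ZMod 4 → Fin n` with consecutive images adjacent,
such that every edge of the graph lies in exactly one cycle. -/
theorem stmt14 (n : ℕ) (hn : Even n) (h4 : 4 ≤ n) :
    ∃ D : Set (ZMod 4 → Fin n),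
      (∀ c ∈ D, Function.Injective c ∧ ∀ i, (cocktailGraph n).Adj (c i) (c (i + 1))) ∧
      ∀ e ∈ (cocktailGraph n).edgeSet,
        ∃! c, c ∈ D ∧ ∃ i : ZMod 4, e = s(c i, c (i + 1)) := by
  obtain ⟨m, hm⟩ := hn
  refine ⟨{c | ∃ i j, ∃ hi : 2*i+1 < n, ∃ hj : 2*j+1 < n, i < j ∧ c = cyc n i j hi hj},
    ?_, ?_⟩
  · rintro c ⟨i, j, hi, hj, hij, rfl⟩
    constructor
    · intro a b h
      fin_cases a <;> fin_cases b <;> simp_all [cyc, Fin.ext_iff] <;> first | rfl | omega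
    · intro k
      show (cyc n i j hi hj k).val/2 ≠ (cyc n i j hi hj (k+1)).val/2
      rcases cyc_halves n i j hi hj k with ⟨h1, h2⟩ | ⟨h1, h2⟩ <;> omega
  · -- the key claim, for ordered endpoints
    have key : ∀ x y : Fin n, x.val/2 < y.val/2 →
        ∃! c, (c ∈ {c | ∃ i j, ∃ hi : 2*i+1 < n, ∃ hj : 2*j+1 < n, i < j ∧
            c = cyc n i j hi hj}) ∧ ∃ k : ZMod 4, s(x, y) = s(c k, c (k + 1)) := by
      intro x y hxy
      have hxn := x.isLt
      have hyn := y.isLt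
      have hi : 2*(x.val/2)+1 < n := by omega
      have hj : 2*(y.val/2)+1 < n := by omega
      refine ⟨cyc n (x.val/2) (y.val/2) hi hj, ⟨⟨_, _, hi, hj, hxy, rfl⟩, ?_⟩, ?_⟩
      · -- existence of an index
        rcases Nat.mod_two_eq_zero_or_one x.val with hx | hx <;>
          rcases Nat.mod_two_eq_zero_or_one y.val with hy | hy
        · refine ⟨0, ?_⟩
          rw [z01]
          exact congrArg₂ (fun u v => s(u, v))
            (Fin.ext (show x.val = (cyc n (x.val/2) (y.val/2) hi hj 0).val by
              simp [cyc]; omega))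
            (Fin.ext (show y.val = (cyc n (x.val/2) (y.val/2) hi hj 1).val by
              simp [cyc]; omega))
        · refine ⟨3, ?_⟩
          rw [z30, Sym2.eq_swap]
          exact congrArg₂ (fun u v => s(u, v))
            (Fin.ext (show y.val = (cyc n (x.val/2) (y.val/2) hi hj 3).val by
              simp [cyc]; omega))
            (Fin.ext (show x.val = (cyc n (x.val/2) (y.val/2) hi hj 0).val by
              simp [cyc]; omega))
        · refine ⟨1, ?_⟩
          rw [z12, Sym2.eq_swap]
          exact congrArg₂ (fun u v => s(u, v))
            (Fin.ext (show y.val = (cyc n (x.val/2) (y.val/2) hi hj 1).val by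
              simp [cyc]; omega))
            (Fin.ext (show x.val = (cyc n (x.val/2) (y.val/2) hi hj 2).val by
              simp [cyc]; omega))
        · refine ⟨2, ?_⟩
          rw [z23]
          exact congrArg₂ (fun u v => s(u, v))
            (Fin.ext (show x.val = (cyc n (x.val/2) (y.val/2) hi hj 2).val by
              simp [cyc]; omega))
            (Fin.ext (show y.val = (cyc n (x.val/2) (y.val/2) hi hj 3).val by
              simp [cyc]; omega))
      · -- uniqueness
        rintro c ⟨⟨i', j', hi', hj', hij', rfl⟩, k, hk⟩
        rw [Sym2.eq_iff] at hk
        have h1 := cyc_halves n i' j' hi' hj' k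
        have hii : i' = x.val/2 ∧ j' = y.val/2 := by
          rcases hk with ⟨hk1, hk2⟩ | ⟨hk1, hk2⟩ <;>
            rcases h1 with ⟨e1, e2⟩ | ⟨e1, e2⟩ <;>
              rw [hk1, hk2] at hxy <;> omega
        obtain ⟨rfl, rfl⟩ := hii
        rfl
    intro e he
    induction e using Sym2.ind with
    | _ x y =>
      have hadj : x.val/2 ≠ y.val/2 := (SimpleGraph.mem_edgeSet _).mp he
      rcases Nat.lt_or_ge (x.val/2) (y.val/2) with h | h
      · exact key x y h
      · have h' : y.val/2 < x.val/2 := by omega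
        rw [show s(x, y) = s(y, x) from Sym2.eq_swap]
        exact key y x h'
end

section
/- A 4-cycle system of order n (a decomposition of the edge set of the complete graph K_n into cycles of length 4) exists if and only if n = 1 or n ≡ 1 (mod 8). -/
namespace Stmt18Aux


/-- vertex offsets of the base 4-cycle number `j` -/
def vnat (j : ℕ) (i : ZMod 4) : ℕ :=
  if i = 0 then 0 else if i = 1 then 4*j+1 else if i = 2 then 8*j+5 else 4*j+3

/-- difference classes used by the edges of base cycle `j` -/
def dlt (j : ℕ) (i : ZMod 4) : ℕ :=
  if i = 0 then 4*j+1 else if i = 1 then 4*j+4 else if i = 2 then 4*j+2 else 4*j+3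

def pos (i : ZMod 4) : Bool := decide (i = 0 ∨ i = 1)

def sgn (k : ℕ) (b : Bool) : ZMod (8*k+1) := if b then 1 else -1

lemma zfour : ∀ i : ZMod 4, i = 0 ∨ i = 1 ∨ i = 2 ∨ i = 3 := by decide

lemma vnat0 (j : ℕ) : vnat j 0 = 0 := by rw [vnat, if_pos rfl]
lemma vnat1 (j : ℕ) : vnat j 1 = 4*j+1 := by
  rw [vnat, if_neg (by decide), if_pos rfl]
lemma vnat2 (j : ℕ) : vnat j 2 = 8*j+5 := by
  rw [vnat, if_neg (by decide), if_neg (by decide), if_pos rfl]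
lemma vnat3 (j : ℕ) : vnat j 3 = 4*j+3 := by
  rw [vnat, if_neg (by decide), if_neg (by decide), if_neg (by decide)]

lemma dlt0 (j : ℕ) : dlt j 0 = 4*j+1 := by rw [dlt, if_pos rfl]
lemma dlt1 (j : ℕ) : dlt j 1 = 4*j+4 := by
  rw [dlt, if_neg (by decide), if_pos rfl]
lemma dlt2 (j : ℕ) : dlt j 2 = 4*j+2 := by
  rw [dlt, if_neg (by decide), if_neg (by decide), if_pos rfl]
lemma dlt3 (j : ℕ) : dlt j 3 = 4*j+3 := by
  rw [dlt, if_neg (by decide), if_neg (by decide), if_neg (by decide)]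

lemma sgn_t (k : ℕ) : sgn k true = 1 := rfl
lemma sgn_f (k : ℕ) : sgn k false = -1 := rfl
lemma sgn_not (k : ℕ) (b : Bool) : sgn k (!b) = - sgn k b := by
  cases b <;> simp [sgn]

lemma dlt_le {k j : ℕ} (hj : j < k) (i : ZMod 4) : dlt j i ≤ 4*k := by
  rcases zfour i with rfl | rfl | rfl | rfl <;>
    simp only [dlt0, dlt1, dlt2, dlt3] <;> omega

lemma dlt_pos (j : ℕ) (i : ZMod 4) : 1 ≤ dlt j i := by
  rcases zfour i with rfl | rfl | rfl | rfl <;>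
    simp only [dlt0, dlt1, dlt2, dlt3] <;> omega

/-- step identity in `ZMod (8k+1)` -/
lemma step (k j : ℕ) (i : ZMod 4) :
    (vnat j (i+1) : ZMod (8*k+1)) - (vnat j i : ZMod (8*k+1))
      = (dlt j i : ZMod (8*k+1)) * sgn k (pos i) := by
  rcases zfour i with rfl | rfl | rfl | rfl
  · rw [show (0:ZMod 4)+1 = 1 from by decide, vnat1, vnat0, dlt0,
      show pos 0 = true from by decide, sgn_t]
    push_cast; ring
  · rw [show (1:ZMod 4)+1 = 2 from by decide, vnat2, vnat1, dlt1,
      show pos 1 = true from by decide, sgn_t]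
    push_cast; ring
  · rw [show (2:ZMod 4)+1 = 3 from by decide, vnat3, vnat2, dlt2,
      show pos 2 = false from by decide, sgn_f]
    push_cast; ring
  · rw [show (3:ZMod 4)+1 = 0 from by decide, vnat0, vnat3, dlt3,
      show pos 3 = false from by decide, sgn_f]
    push_cast; ring

/-- the class/sign of an edge determines (j, i, sign) -/
lemma dlt_inj {k j j' : ℕ} (hj : j < k) (hj' : j' < k) {i i' : ZMod 4} {b b' : Bool}
    (h : (dlt j i : ZMod (8*k+1)) * sgn k b = (dlt j' i' : ZMod (8*k+1)) * sgn k b') :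
    j = j' ∧ i = i' ∧ b = b' := by
  have hle := dlt_le hj i
  have hle' := dlt_le hj' i'
  have hp := dlt_pos j i
  have hp' := dlt_pos j' i'
  have same : b = b' := by
    by_contra hbb
    have hsum : ((dlt j i + dlt j' i' : ℕ) : ZMod (8*k+1)) = 0 := by
      push_cast
      cases b <;> cases b' <;> simp_all [sgn_t, sgn_f] <;>
        first | linear_combination h | linear_combination -h
    have hdvd : (8*k+1) ∣ (dlt j i + dlt j' i') :=
      (ZMod.natCast_eq_zero_iff _ _).1 hsum
    have := Nat.le_of_dvd (by omega) hdvd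
    omega
  subst same
  have hcast : (dlt j i : ZMod (8*k+1)) = (dlt j' i' : ZMod (8*k+1)) := by
    cases b <;> simp only [sgn_t, sgn_f, mul_one, mul_neg] at h
    · exact neg_inj.1 h
    · exact h
  have hnat : dlt j i = dlt j' i' := by
    have := congrArg ZMod.val hcast
    rwa [ZMod.val_cast_of_lt (by omega), ZMod.val_cast_of_lt (by omega)] at this
  refine ⟨?_, ?_, rfl⟩ <;>
  · rcases zfour i with rfl | rfl | rfl | rfl <;> rcases zfour i' with rfl | rfl | rfl | rfl <;>
      simp only [dlt0, dlt1, dlt2, dlt3] at hnat <;> first | rfl | omega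

/-- the cycles -/
def cyc (k j : ℕ) (t : ZMod (8*k+1)) : ZMod 4 → ZMod (8*k+1) :=
  fun i => t + (vnat j i : ZMod (8*k+1))

def Dset (k : ℕ) : Set (ZMod 4 → ZMod (8*k+1)) :=
  {c | ∃ j < k, ∃ t, c = cyc k j t}

lemma vnat_lt {k j : ℕ} (hj : j < k) (i : ZMod 4) : vnat j i < 8*k+1 := by
  rcases zfour i with rfl | rfl | rfl | rfl <;>
    simp only [vnat0, vnat1, vnat2, vnat3] <;> omega

lemma cyc_inj {k j : ℕ} (hj : j < k) (t : ZMod (8*k+1)) :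
    Function.Injective (cyc k j t) := by
  intro i i' h
  have h2 : (vnat j i : ZMod (8*k+1)) = (vnat j i' : ZMod (8*k+1)) := by
    have := h; unfold cyc at this; exact add_left_cancel this
  have h3 : vnat j i = vnat j i' := by
    have := congrArg ZMod.val h2
    rwa [ZMod.val_cast_of_lt (vnat_lt hj i), ZMod.val_cast_of_lt (vnat_lt hj i')] at this
  rcases zfour i with rfl | rfl | rfl | rfl <;> rcases zfour i' with rfl | rfl | rfl | rfl <;>
    simp only [vnat0, vnat1, vnat2, vnat3] at h3 <;> first | rfl | omega

/-- If an edge {u,w} lies on cycle (j,t) at index i, then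
    w - u = dlt j i * sgn(s) where s records position-sign xor orientation. -/
lemma edge_diff {k j : ℕ} (t u w : ZMod (8*k+1)) (i : ZMod 4) (o : Bool)
    (h : cond o (cyc k j t i = u ∧ cyc k j t (i+1) = w)
         (cyc k j t i = w ∧ cyc k j t (i+1) = u)) :
    w - u = (dlt j i : ZMod (8*k+1)) * sgn k (cond o (pos i) (!pos i)) := by
  have hs := step k j i
  cases o
  · obtain ⟨h1, h2⟩ : cyc k j t i = w ∧ cyc k j t (i+1) = u := h
    show w - u = (dlt j i : ZMod (8*k+1)) * sgn k (!pos i)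
    rw [sgn_not, mul_neg, ← hs, ← h1, ← h2]
    unfold cyc; ring
  · obtain ⟨h1, h2⟩ : cyc k j t i = u ∧ cyc k j t (i+1) = w := h
    show w - u = (dlt j i : ZMod (8*k+1)) * sgn k (pos i)
    rw [← hs, ← h1, ← h2]
    unfold cyc; ring

/-- existence and uniqueness of the cycle through a given edge -/
theorem bwd (k : ℕ) (u w : ZMod (8*k+1)) (huw : u ≠ w) :
    ∃! c, c ∈ Dset k ∧ ∃ i : ZMod 4, s(u, w) = s(c i, c (i + 1)) := by
  classical
  -- the difference and its class
  set d : ZMod (8*k+1) := w - u with hd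
  have hd0 : d ≠ 0 := sub_ne_zero.2 (Ne.symm huw)
  have hdv1 : 1 ≤ d.val := by
    rcases Nat.eq_zero_or_pos d.val with h0 | h0
    · exact absurd ((ZMod.val_eq_zero d).1 h0) hd0
    · exact h0
  have hdvlt : d.val < 8*k+1 := ZMod.val_lt d
  -- m, b with d = m * sgn b, 1 ≤ m ≤ 4k
  obtain ⟨m, b, hm1, hm2, hmb⟩ :
      ∃ (m : ℕ) (b : Bool), 1 ≤ m ∧ m ≤ 4*k ∧ d = (m : ZMod (8*k+1)) * sgn k b := by
    by_cases hc : d.val ≤ 4*k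
    · exact ⟨d.val, true, hdv1, hc, by rw [sgn_t, mul_one, ZMod.natCast_rightInverse d]⟩
    · refine ⟨8*k+1 - d.val, false, by omega, by omega, ?_⟩
      rw [sgn_f, mul_neg_one, Nat.cast_sub (le_of_lt hdvlt), ZMod.natCast_self,
        ZMod.natCast_rightInverse d]
      ring
  -- locate m among the difference classes
  set j : ℕ := (m - 1) / 4 with hj
  have hjk : j < k := by omega
  set r : ℕ := (m - 1) % 4 with hr
  have hmr : m = 4*j + 1 + r ∧ r < 4 := by omega
  set i₀ : ZMod 4 := if r = 0 then 0 else if r = 1 then 2 else if r = 2 then 3 else 1 with hi₀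
  have hdlt : dlt j i₀ = m := by
    rcases (show r = 0 ∨ r = 1 ∨ r = 2 ∨ r = 3 by omega) with h | h | h | h <;>
      rw [hi₀] <;> simp only [h] <;> norm_num [dlt0, dlt1, dlt2, dlt3] <;> omega
  -- the translate
  set t : ZMod (8*k+1) :=
    (if b = pos i₀ then u else w) - (vnat j i₀ : ZMod (8*k+1)) with ht
  have hstep := step k j i₀
  have hct : cyc k j t i₀ = if b = pos i₀ then u else w := by
    unfold cyc; rw [ht]; ring
  have hct1 : cyc k j t (i₀+1) = (if b = pos i₀ then u else w)
      + (dlt j i₀ : ZMod (8*k+1)) * sgn k (pos i₀) := by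
    unfold cyc; rw [ht, ← hstep]; ring
  have hedge : s(u, w) = s(cyc k j t i₀, cyc k j t (i₀+1)) := by
    by_cases hb : b = pos i₀
    · rw [hct1, hct, if_pos hb, hdlt, ← hb, ← hmb]
      rw [hd]
      congr 1
      ring
    · have hb' : pos i₀ = !b := by
        cases b <;> cases hpe : pos i₀ <;> first | decide | exact absurd hpe.symm hb
      rw [hct1, hct, if_neg hb, hdlt, hb', sgn_not, Sym2.eq_swap]
      congr 1
      rw [mul_neg, ← hmb, hd]
      ring
  refine ⟨cyc k j t, ⟨⟨j, hjk, t, rfl⟩, i₀, hedge⟩, ?_⟩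
  -- uniqueness
  rintro c' ⟨⟨j', hj', t', rfl⟩, i', hedge'⟩
  -- orientations
  have classify : ∀ (jj : ℕ) (tt : ZMod (8*k+1)) (ii : ZMod 4),
      s(u, w) = s(cyc k jj tt ii, cyc k jj tt (ii+1)) →
      ∃ o : Bool, w - u = (dlt jj ii : ZMod (8*k+1)) * sgn k (cond o (pos ii) (!pos ii))
        ∧ cyc k jj tt ii = (cond o u w) := by
    intro jj tt ii hE
    rcases Sym2.eq_iff.1 hE with ⟨h1, h2⟩ | ⟨h1, h2⟩
    · exact ⟨true, edge_diff tt u w ii true ⟨h1.symm, h2.symm⟩, h1.symm⟩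
    · exact ⟨false, edge_diff tt u w ii false ⟨h2.symm, h1.symm⟩, h2.symm⟩
  obtain ⟨o, hoeq, hov⟩ := classify j t i₀ hedge
  obtain ⟨o', hoeq', hov'⟩ := classify j' t' i' hedge'
  have hkey := dlt_inj hj' hjk (hoeq'.symm.trans hoeq)
  obtain ⟨hjj, hii, hbb⟩ := hkey
  subst hjj
  subst hii
  have hoo : o' = o := by
    cases o <;> cases o' <;> first
      | rfl
      | (exfalso
         simp only [Bool.cond_true, Bool.cond_false] at hbb
         cases hpe : pos i₀ <;> rw [hpe] at hbb <;> simp at hbb)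
  subst hoo
  have : t' = t := by
    have h1 : cyc k j t' i₀ = cyc k j t i₀ := by rw [hov, hov']
    unfold cyc at h1
    exact add_right_cancel h1
  rw [this]



open Finset in
theorem fwd (n : ℕ) (hn : 1 ≤ n)
    (D : Set (ZMod 4 → Fin n))
    (h1 : ∀ c ∈ D, Function.Injective c ∧
        ∀ i, (⊤ : SimpleGraph (Fin n)).Adj (c i) (c (i + 1)))
    (h2 : ∀ e ∈ (⊤ : SimpleGraph (Fin n)).edgeSet,
        ∃! c, c ∈ D ∧ ∃ i : ZMod 4, e = s(c i, c (i + 1))) :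
    n = 1 ∨ n % 8 = 1 := by
  classical
  by_cases h1n : n = 1
  · exact Or.inl h1n
  right
  have hn2 : 2 ≤ n := by omega
  set F : Finset (ZMod 4 → Fin n) := (Set.toFinite D).toFinset with hF
  have hFmem : ∀ c, c ∈ F ↔ c ∈ D := fun c => Set.Finite.mem_toFinset _
  set φ : (ZMod 4 → Fin n) × ZMod 4 → Sym2 (Fin n) :=
    fun p => s(p.1 p.2, p.1 (p.2 + 1)) with hφ
  have key0 : ∀ c ∈ D, ∀ i : ZMod 4, φ (c, i) ∈ (⊤ : SimpleGraph (Fin n)).edgeSet := by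
    intro c hc i
    exact (h1 c hc).2 i
  have idx : ∀ c ∈ D, ∀ i i' : ZMod 4,
      s(c i, c (i+1)) = s(c i', c (i'+1)) → i = i' := by
    intro c hc i i' he
    rcases Sym2.eq_iff.1 he with ⟨ha, _⟩ | ⟨ha, hb⟩
    · exact (h1 c hc).1 ha
    · have e1 : i = i' + 1 := (h1 c hc).1 ha
      have e2 : i + 1 = i' := (h1 c hc).1 hb
      have : (0 : ZMod 4) = 2 := by linear_combination e1 - e2
      exact absurd this (by decide)
  have keyInj : Set.InjOn φ ↑(F ×ˢ (univ : Finset (ZMod 4))) := by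
    rintro ⟨c, i⟩ hp ⟨c', i'⟩ hp' heq
    simp only [coe_product, Set.mem_prod, mem_coe, hFmem] at hp hp'
    have hcD := hp.1
    have hcD' := hp'.1
    have he : φ (c, i) ∈ (⊤ : SimpleGraph (Fin n)).edgeSet := key0 c hcD i
    obtain ⟨c₀, -, hu⟩ := h2 _ he
    have hcc : c = c' := by
      rw [hu c ⟨hcD, i, rfl⟩, hu c' ⟨hcD', i', heq⟩]
    subst hcc
    have : i = i' := idx c hcD i i' heq
    simp [this]
  have himg : (⊤ : SimpleGraph (Fin n)).edgeFinset
      = (F ×ˢ (univ : Finset (ZMod 4))).image φ := by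
    ext e
    simp only [SimpleGraph.mem_edgeFinset, mem_image]
    constructor
    · intro he
      obtain ⟨c, ⟨hc, i, hi⟩, -⟩ := h2 e he
      exact ⟨(c, i), by simp [hFmem, hc], hi.symm⟩
    · rintro ⟨⟨c, i⟩, hp, rfl⟩
      simp only [mem_product, hFmem, mem_univ, and_true] at hp
      exact key0 c hp i
  have hcard : n.choose 2 = 4 * #F := by
    have := SimpleGraph.card_edgeFinset_top_eq_card_choose_two (V := Fin n)
    rw [himg, card_image_of_injOn keyInj, card_product, card_univ] at this
    simp only [Fintype.card_fin] at this
    rw [← this]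
    have : Fintype.card (ZMod 4) = 4 := rfl
    rw [this]; ring
  -- parity
  have v : Fin n := ⟨0, by omega⟩
  set S1 : Finset ((ZMod 4 → Fin n) × ZMod 4) :=
    (F ×ˢ (univ : Finset (ZMod 4))).filter (fun p => p.1 p.2 = v) with hS1
  set S2 : Finset ((ZMod 4 → Fin n) × ZMod 4) :=
    (F ×ˢ (univ : Finset (ZMod 4))).filter (fun p => p.1 (p.2 + 1) = v) with hS2
  have hdisj : Disjoint S1 S2 := by
    rw [Finset.disjoint_left]
    rintro ⟨c, i⟩ hp hq
    simp only [hS1, hS2, mem_filter, mem_product, hFmem] at hp hq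
    have : c i = c (i + 1) := hp.2.trans hq.2.symm
    have : i = i + 1 := (h1 c hp.1.1).1 this
    have : (0 : ZMod 4) = 1 := by linear_combination this
    exact absurd this (by decide)
  have hcards : #S1 = #S2 := by
    apply card_nbij' (fun p => (p.1, p.2 - 1)) (fun p => (p.1, p.2 + 1))
    · rintro ⟨c, i⟩ hp
      simp only [hS1, hS2, mem_coe, mem_filter, mem_product, mem_univ, and_true] at hp ⊢
      refine ⟨hp.1, ?_⟩
      rw [sub_add_cancel]
      exact hp.2
    · rintro ⟨c, i⟩ hp
      simp only [hS1, hS2, mem_coe, mem_filter, mem_product, mem_univ, and_true] at hp ⊢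
      exact hp
    · rintro ⟨c, i⟩ _; simp
    · rintro ⟨c, i⟩ _; simp
  have hTimg : ((⊤ : SimpleGraph (Fin n)).edgeFinset.filter (fun e => v ∈ e))
      = (S1 ∪ S2).image φ := by
    ext e
    simp only [mem_filter, SimpleGraph.mem_edgeFinset, mem_image]
    constructor
    · rintro ⟨he, hv⟩
      obtain ⟨c, ⟨hc, i, hi⟩, -⟩ := h2 e he
      subst hi
      rcases Sym2.mem_iff.1 hv with hcv | hcv
      · exact ⟨(c, i), mem_union_left _ (by simp [hS1, hFmem, hc, hcv]), rfl⟩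
      · exact ⟨(c, i), mem_union_right _ (by simp [hS2, hFmem, hc, hcv]), rfl⟩
    · rintro ⟨⟨c, i⟩, hp, rfl⟩
      rcases mem_union.1 hp with hp | hp <;>
        simp only [hS1, hS2, mem_filter, mem_product, hFmem] at hp
      · exact ⟨key0 c hp.1.1 i, by simp [hφ, hp.2]⟩
      · exact ⟨key0 c hp.1.1 i, by simp [hφ, hp.2]⟩
  have hTcard : n - 1 = 2 * #S1 := by
    have hd : #((⊤ : SimpleGraph (Fin n)).edgeFinset.filter (fun e => v ∈ e)) = n - 1 := by
      rw [← SimpleGraph.incidenceFinset_eq_filter, SimpleGraph.card_incidenceFinset_eq_degree,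
        SimpleGraph.complete_graph_degree, Fintype.card_fin]
    rw [hTimg, card_image_of_injOn (keyInj.mono ?_), card_union_of_disjoint hdisj,
      ← hcards] at hd
    · omega
    · intro p hp
      rcases mem_union.1 hp with hp | hp <;>
        simp only [hS1, hS2, mem_filter] at hp <;> exact hp.1
  -- arithmetic
  obtain ⟨m, hm⟩ : ∃ m, n - 1 = 2 * m := ⟨#S1, hTcard⟩
  have hch : n.choose 2 = n * m := by
    rw [Nat.choose_two_right, hm, show n * (2 * m) = 2 * (n * m) by ring,
      Nat.mul_div_cancel_left _ (by norm_num)]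
  have h4 : (4 : ℕ) ∣ n * m := hch ▸ ⟨#F, hcard⟩
  have hodd : Odd n := by
    rcases Nat.even_or_odd n with he | ho
    · exfalso; obtain ⟨t, ht⟩ := he; omega
    · exact ho
  have hcop : Nat.Coprime 4 n := by
    have : Nat.Coprime (2 ^ 2) n := (Nat.coprime_pow_left_iff (by norm_num) 2 n).2
      (Nat.coprime_two_left.2 hodd)
    simpa using this
  have h4m : (4 : ℕ) ∣ m := (Nat.Coprime.dvd_of_dvd_mul_left hcop h4)
  obtain ⟨t, ht⟩ := h4m
  omega

end Stmt18Aux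


/-- A 4-cycle system of order `n ≥ 1` (a decomposition of the edges of the complete graph
`K_n` into 4-cycles: injective maps `ZMod 4 → Fin n` with consecutive images adjacent,
every edge lying in exactly one cycle) exists iff `n = 1` or `n ≡ 1 (mod 8)`. -/
theorem stmt18 (n : ℕ) (hn : 1 ≤ n) :
    (∃ D : Set (ZMod 4 → Fin n),
      (∀ c ∈ D, Function.Injective c ∧
        ∀ i, (⊤ : SimpleGraph (Fin n)).Adj (c i) (c (i + 1))) ∧
      ∀ e ∈ (⊤ : SimpleGraph (Fin n)).edgeSet,
        ∃! c, c ∈ D ∧ ∃ i : ZMod 4, e = s(c i, c (i + 1))) ↔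
    (n = 1 ∨ n % 8 = 1) := by
  constructor
  · rintro ⟨D, h1, h2⟩
    exact Stmt18Aux.fwd n hn D h1 h2
  · intro h
    have h8 : n % 8 = 1 := by
      rcases h with rfl | h
      · rfl
      · exact h
    obtain ⟨k, rfl⟩ : ∃ k, n = 8 * k + 1 := ⟨n / 8, by omega⟩
    refine ⟨Stmt18Aux.Dset k, ?_, ?_⟩
    · rintro c ⟨j, hj, t, rfl⟩
      refine ⟨Stmt18Aux.cyc_inj hj t, fun i => ?_⟩
      have hne : i ≠ i + 1 := by
        intro hEq
        have : (0 : ZMod 4) = 1 := by linear_combination hEq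
        exact absurd this (by decide)
      exact fun hEq => hne (Stmt18Aux.cyc_inj hj t hEq)
    · intro e he
      induction e using Sym2.ind with
      | _ u w =>
        have huw : u ≠ w := (SimpleGraph.top_adj u w).1 ((SimpleGraph.mem_edgeSet _).1 he)
        exact Stmt18Aux.bwd k u w huw
end
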